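/- arXiv:1311.3270 — 2 statements merged into one kernel-verified Lean document; each statement's English description precedes it below -/
import Mathlib

section
/- For the 5-dimensional Lie algebra g above, the closed 1-form α2 satisfies the Lefschetz annihilation condition (dα5)^2 ∧ α2 = 0 and the interior product i_{X5} α2 = 0, yet the 4-cochain α5 ∧ dα5 ∧ α2 is exact while [α2] ≠ 0 in H^1(g). Hence the Lefschetz relation R_{Lef_1} for (g, α5) is not the graph of an injective map. -/
/-! Every product of basis 1-forms in which some `αᵢ` occurs twice vanishes, since
`ι u * x * ι u = 0` for every `x` in an exterior algebra. Hence `dα5 ∧ α2 = α1 ∧ α4 ∧ α2` and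
`(dα5)² ∧ α2 = 0`, while `α5 ∧ dα5 ∧ α2 = α1 ∧ α2 ∧ α4 ∧ α5 = -d(α3 ∧ α4 ∧ α5)`.
Here `αᵢ` is `a5 (i - 1)`. -/

/-- The bracket of the 5-dimensional nilpotent Lie algebra `g`:
`[X1,X2]=X3, [X1,X3]=X4, [X1,X4]=X5, [X2,X3]=X5`. -/
def bracket5 (x y : Fin 5 → ℝ) : Fin 5 → ℝ :=
  ![0, 0, x 0 * y 1 - x 1 * y 0, x 0 * y 2 - x 2 * y 0,
    (x 0 * y 3 - x 3 * y 0) + (x 1 * y 2 - x 2 * y 1)]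

/-- The dual basis 1-forms `α1,…,α5`, viewed in the exterior algebra `Λ g*`. -/
noncomputable def a5 (i : Fin 5) : ExteriorAlgebra ℝ (Module.Dual ℝ (Fin 5 → ℝ)) :=
  ExteriorAlgebra.ι ℝ (LinearMap.proj i)

/-- `dα5 = α1∧α4 + α2∧α3`. -/
noncomputable def da5 : ExteriorAlgebra ℝ (Module.Dual ℝ (Fin 5 → ℝ)) :=
  a5 0 * a5 3 + a5 1 * a5 2

/-- The Chevalley-Eilenberg differential on an arbitrary 1-form `β = Σ cᵢ αᵢ`, expressed in
the exterior algebra: `dβ = c₃ dα3 + c₄ dα4 + c₅ dα5` (since `dα1 = dα2 = 0`). -/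
noncomputable def D1 (β : Module.Dual ℝ (Fin 5 → ℝ)) :
    ExteriorAlgebra ℝ (Module.Dual ℝ (Fin 5 → ℝ)) :=
  β ![0, 0, 1, 0, 0] • (-(a5 0 * a5 1)) + β ![0, 0, 0, 1, 0] • (-(a5 0 * a5 2)) +
    β ![0, 0, 0, 0, 1] • da5

/-- The set of differentials of decomposable 3-cochains (whose span is the space of exact
4-cochains), via the derivation rule `d(β∧γ∧δ) = dβ∧γ∧δ - β∧dγ∧δ + β∧γ∧dδ`. -/
noncomputable def exact4 : Set (ExteriorAlgebra ℝ (Module.Dual ℝ (Fin 5 → ℝ))) :=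
  {x | ∃ β γ δ : Module.Dual ℝ (Fin 5 → ℝ),
    x = D1 β * ExteriorAlgebra.ι ℝ γ * ExteriorAlgebra.ι ℝ δ
      - ExteriorAlgebra.ι ℝ β * D1 γ * ExteriorAlgebra.ι ℝ δ
      + ExteriorAlgebra.ι ℝ β * ExteriorAlgebra.ι ℝ γ * D1 δ}

theorem LinearMap.proj_ne_zero {R ι : Type*} [Semiring R] [Nontrivial R] (i : ι) :
    (LinearMap.proj i : (ι → R) →ₗ[R] R) ≠ 0 := by
  classical
  intro h
  simpa using LinearMap.congr_fun h (Pi.single i 1)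

namespace ExteriorAlgebra

variable {R M : Type*} [CommRing R] [AddCommGroup M] [Module R M]

theorem ι_mul_ι_eq_neg (u v : M) : ι R u * ι R v = -(ι R v * ι R u) :=
  eq_neg_of_add_eq_zero_left (ι_add_mul_swap u v)

theorem ι_mul_ι_mul_ι_comm (u v w : M) :
    ι R u * ι R v * ι R w = ι R w * (ι R u * ι R v) := by
  rw [mul_assoc, ι_mul_ι_eq_neg v w, mul_neg, ← mul_assoc, ι_mul_ι_eq_neg u w, neg_mul, neg_neg,
    mul_assoc]

theorem ι_mul_mul_ι_self (u : M) (x : ExteriorAlgebra R M) : ι R u * x * ι R u = 0 := by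
  induction x using CliffordAlgebra.left_induction with
  | algebraMap r => rw [← Algebra.commutes, mul_assoc, ι_sq_zero, mul_zero]
  | add x y hx hy => rw [mul_add, add_mul, hx, hy, add_zero]
  | ι_mul x v hx =>
    change ι R u * (ι R v * x) * ι R u = 0
    rw [← mul_assoc, ι_mul_ι_eq_neg u v, neg_mul, neg_mul, mul_assoc, mul_assoc,
      ← mul_assoc (ι R u), hx, mul_zero, neg_zero]

end ExteriorAlgebra

open ExteriorAlgebra

theorem a5_mul_mul_a5_self (i : Fin 5) (x : ExteriorAlgebra ℝ (Module.Dual ℝ (Fin 5 → ℝ))) :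
    a5 i * x * a5 i = 0 :=
  ι_mul_mul_ι_self _ x

theorem a5_mul_a5_mul_a5_comm (i j k : Fin 5) : a5 i * a5 j * a5 k = a5 k * (a5 i * a5 j) :=
  ι_mul_ι_mul_ι_comm _ _ _

theorem da5_mul_a5_one : da5 * a5 1 = a5 0 * a5 3 * a5 1 := by
  rw [da5, add_mul, a5_mul_mul_a5_self, add_zero]

theorem da5_mul_da5_mul_a5_one : da5 * da5 * a5 1 = 0 :=
  calc da5 * da5 * a5 1 = da5 * (a5 0 * a5 3 * a5 1) := by rw [mul_assoc, da5_mul_a5_one]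
    _ = a5 0 * a5 3 * a5 0 * (a5 3 * a5 1) + a5 1 * (a5 2 * a5 0 * a5 3) * a5 1 := by
      simp only [da5, add_mul, mul_assoc]
    _ = 0 := by rw [a5_mul_mul_a5_self, a5_mul_mul_a5_self, zero_mul, add_zero]

theorem a5_four_mul_da5_mul_a5_one : a5 4 * da5 * a5 1 = a5 0 * a5 1 * a5 3 * a5 4 :=
  calc a5 4 * da5 * a5 1 = a5 4 * (a5 0 * a5 3) * a5 1 := by
        rw [da5, mul_add, add_mul, mul_assoc (a5 4) (a5 1 * a5 2), a5_mul_mul_a5_self, mul_zero,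
          add_zero]
    _ = a5 0 * (a5 3 * a5 4 * a5 1) := by
      rw [← a5_mul_a5_mul_a5_comm, mul_assoc, mul_assoc, mul_assoc]
    _ = a5 0 * a5 1 * a5 3 * a5 4 := by
      rw [a5_mul_a5_mul_a5_comm]
      simp only [mul_assoc]

theorem D1_proj_two : D1 (LinearMap.proj 2) = -(a5 0 * a5 1) := by simp [D1]

theorem D1_proj_three : D1 (LinearMap.proj 3) = -(a5 0 * a5 2) := by simp [D1]

theorem D1_proj_four : D1 (LinearMap.proj 4) = da5 := by simp [D1]

theorem a5_zero_mul_a5_one_mul_a5_three_mul_a5_four_mem_span_exact4 :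
    a5 0 * a5 1 * a5 3 * a5 4 ∈ Submodule.span ℝ exact4 := by
  have hd : -(a5 0 * a5 1 * a5 3 * a5 4) ∈ exact4 := by
    refine ⟨LinearMap.proj 2, LinearMap.proj 3, LinearMap.proj 4, ?_⟩
    change _ = D1 _ * a5 3 * a5 4 - a5 2 * D1 _ * a5 4 + a5 2 * a5 3 * D1 _
    calc -(a5 0 * a5 1 * a5 3 * a5 4)
        = -(a5 0 * a5 1 * a5 3 * a5 4) + a5 2 * a5 0 * a5 2 * a5 4
          + a5 2 * (a5 3 * a5 0 * a5 3) + a5 2 * (a5 3 * a5 1) * a5 2 := by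
          simp only [a5_mul_mul_a5_self, zero_mul, mul_zero, add_zero]
      _ = _ := by
        rw [D1_proj_two, D1_proj_three, D1_proj_four, da5]
        noncomm_ring
  simpa only [neg_neg] using neg_mem (Submodule.subset_span hd)

/-- The closed 1-form `α2` satisfies `i_{X5} α2 = 0` and `(dα5)² ∧ α2 = 0`, its class in
`H¹(g)` is non-zero (i.e. `α2 ≠ 0`, as there are no exact 1-cochains), yet
`α5 ∧ dα5 ∧ α2` is exact. Hence the Lefschetz relation `R_{Lef₁}` for `(g, α5)` is not
the graph of an injective map. -/
theorem stmt7 :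
    (∀ X Y, (LinearMap.proj 1 : Module.Dual ℝ (Fin 5 → ℝ)) (bracket5 X Y) = 0) ∧
    (LinearMap.proj 1 : Module.Dual ℝ (Fin 5 → ℝ)) ![0, 0, 0, 0, 1] = 0 ∧
    da5 * da5 * a5 1 = 0 ∧
    (LinearMap.proj 1 : Module.Dual ℝ (Fin 5 → ℝ)) ≠ 0 ∧
    a5 4 * da5 * a5 1 ∈ Submodule.span ℝ exact4 :=
  ⟨fun _ _ => rfl, rfl, da5_mul_da5_mul_a5_one, LinearMap.proj_ne_zero 1,
    a5_four_mul_da5_mul_a5_one ▸ a5_zero_mul_a5_one_mul_a5_three_mul_a5_four_mem_span_exact4⟩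
end

section
/- The multiplication on R^5 given by (x)·(y) = (x1+y1, x2+y2, x3+y3+x1y2, x4+y4+x1y3+(x1²/2)y2, x5+y5-x1y4-((x1²/2)+x2)y3-(x1/2)y2²-((x1³/6)+x1x2)y2) is associative with identity 0, and every element has an inverse, so it makes R^5 a group. -/
/-- The multiplication on ℝ⁵ of the simply connected nilpotent Lie group `G`. -/
noncomputable def mul5 (x y : ℝ × ℝ × ℝ × ℝ × ℝ) : ℝ × ℝ × ℝ × ℝ × ℝ :=
  ⟨x.1 + y.1,
   x.2.1 + y.2.1,
   x.2.2.1 + y.2.2.1 + x.1 * y.2.1,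
   x.2.2.2.1 + y.2.2.2.1 + x.1 * y.2.2.1 + (x.1 ^ 2 / 2) * y.2.1,
   x.2.2.2.2 + y.2.2.2.2 - x.1 * y.2.2.2.1 - (x.1 ^ 2 / 2 + x.2.1) * y.2.2.1
     - (x.1 / 2) * y.2.1 ^ 2 - (x.1 ^ 3 / 6 + x.1 * x.2.1) * y.2.1⟩

/-- Obtained by solving `mul5 x y = 0` for `y`; the system is triangular in the coordinates. -/
noncomputable def inv5 (x : ℝ × ℝ × ℝ × ℝ × ℝ) : ℝ × ℝ × ℝ × ℝ × ℝ :=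
  ⟨-x.1,
   -x.2.1,
   -x.2.2.1 + x.1 * x.2.1,
   -x.2.2.2.1 + x.1 * x.2.2.1 - x.1 ^ 2 / 2 * x.2.1,
   -x.2.2.2.2 - x.1 * x.2.2.2.1 + x.1 ^ 2 / 2 * x.2.2.1 - x.2.1 * x.2.2.1
     + x.1 / 2 * x.2.1 ^ 2 - x.1 ^ 3 / 6 * x.2.1⟩

theorem mul5_assoc (a b c : ℝ × ℝ × ℝ × ℝ × ℝ) :
    mul5 (mul5 a b) c = mul5 a (mul5 b c) := by
  simp only [mul5, Prod.mk.injEq]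
  refine ⟨by ring, by ring, by ring, by ring, by ring⟩

theorem zero_mul5 (a : ℝ × ℝ × ℝ × ℝ × ℝ) : mul5 ⟨0, 0, 0, 0, 0⟩ a = a := by
  simp [mul5]

theorem mul5_zero (a : ℝ × ℝ × ℝ × ℝ × ℝ) : mul5 a ⟨0, 0, 0, 0, 0⟩ = a := by
  simp [mul5]

theorem mul5_inv5 (a : ℝ × ℝ × ℝ × ℝ × ℝ) : mul5 a (inv5 a) = ⟨0, 0, 0, 0, 0⟩ := by
  simp only [mul5, inv5, Prod.mk.injEq]
  refine ⟨by ring, by ring, by ring, by ring, by ring⟩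

theorem inv5_inv5 (a : ℝ × ℝ × ℝ × ℝ × ℝ) : inv5 (inv5 a) = a := by
  simp only [inv5]
  ext <;> simp only <;> ring

theorem inv5_mul5 (a : ℝ × ℝ × ℝ × ℝ × ℝ) : mul5 (inv5 a) a = ⟨0, 0, 0, 0, 0⟩ := by
  simpa only [inv5_inv5] using mul5_inv5 (inv5 a)

/-- `mul5` is associative, has identity `(0,0,0,0,0)` and every element is invertible, so it
makes ℝ⁵ a group. -/
theorem stmt10 :
    (∀ a b c, mul5 (mul5 a b) c = mul5 a (mul5 b c)) ∧
    (∀ a, mul5 ⟨0, 0, 0, 0, 0⟩ a = a ∧ mul5 a ⟨0, 0, 0, 0, 0⟩ = a) ∧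
    (∀ a, ∃ b, mul5 a b = ⟨0, 0, 0, 0, 0⟩ ∧ mul5 b a = ⟨0, 0, 0, 0, 0⟩) :=
  ⟨mul5_assoc, fun a => ⟨zero_mul5 a, mul5_zero a⟩,
    fun a => ⟨inv5 a, mul5_inv5 a, inv5_mul5 a⟩⟩
end
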